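/- In the (3,1,4) scenario, any classical strategy satisfies the facet inequality p(2|1) + p(1|3) + p(3|1) + p(4|2) ≤ 3D, where p(z|x) = Σ_m p_e(m|x) p_d(z|m), z ∈ {1,2,3,4}, x ∈ {1,2,3}, and D = (1/3) Σ_m max_x p_e(m|x). -/

import Mathlib

open BigOperators

/-!
For each message `m`, Bob's output distribution `pd · m` weights the probabilities `pe m x`
that the facet picks out, and a convex combination of them is at most `max_x pe m x`.
Summing over `m` gives `3D`. The same bound holds for any assignment of an input to each output.
-/

open Finset

theorem sum_mul_le_of_le_of_sum_eq_one {Z : Type*} [Fintype Z] (w a : Z → ℝ)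
    (hw0 : ∀ z, 0 ≤ w z) (hw1 : ∑ z, w z = 1) {S : ℝ} (ha : ∀ z, a z ≤ S) :
    ∑ z, a z * w z ≤ S :=
  calc ∑ z, a z * w z ≤ ∑ z, S * w z :=
        sum_le_sum fun z _ => mul_le_mul_of_nonneg_right (ha z) (hw0 z)
    _ = S := by rw [← mul_sum, hw1, mul_one]

theorem sum_guess_le_sum_sup {M X Z : Type*} [Fintype M] [Fintype X] [Nonempty X] [Fintype Z]
    (pe : M → X → ℝ) (pd : Z → M → ℝ) (hpd0 : ∀ z m, 0 ≤ pd z m)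
    (hpd1 : ∀ m, ∑ z, pd z m = 1) (guess : Z → X) :
    ∑ z, ∑ m, pe m (guess z) * pd z m ≤ ∑ m, univ.sup' univ_nonempty (pe m) := by
  rw [sum_comm]
  exact sum_le_sum fun m _ =>
    sum_mul_le_of_le_of_sum_eq_one (pd · m) (pe m ∘ guess) (hpd0 · m) (hpd1 m)
      fun z => le_sup' (pe m) (mem_univ (guess z))

/-- Inputs and outputs are indexed from `0`: `p z x` is the paper's `p(z+1|x+1)`. -/
theorem stmt11_general (M : Type*) [Fintype M]
    (pe : M → Fin 3 → ℝ)
    (pd : Fin 4 → M → ℝ) (hpd0 : ∀ z m, 0 ≤ pd z m)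
    (hpd1 : ∀ m, ∑ z, pd z m = 1)
    (p : Fin 4 → Fin 3 → ℝ)
    (hp : ∀ z x, p z x = ∑ m, pe m x * pd z m)
    (D : ℝ)
    (hD : D = (1 / 3 : ℝ) * ∑ m, Finset.univ.sup' Finset.univ_nonempty fun x => pe m x) :
    p 1 0 + p 0 2 + p 2 0 + p 3 1 ≤ 3 * D := by
  have hfacet : p 1 0 + p 0 2 + p 2 0 + p 3 1 = ∑ z, ∑ m, pe m (![2, 0, 0, 1] z) * pd z m := by
    simp only [hp, Fin.sum_univ_four]
    simp only [Matrix.cons_val]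
    ring
  have := sum_guess_le_sum_sup pe pd hpd0 hpd1 ![2, 0, 0, 1]
  rw [hfacet, hD]
  linarith

/-- (3,1,4) scenario: with Alice's inputs `x ∈ {1,2,3}` (here `0,1,2`) and Bob's outputs
`z ∈ {1,2,3,4}` (here `0,1,2,3`), any classical strategy obeys the facet inequality
`p(2|1) + p(1|3) + p(3|1) + p(4|2) ≤ 3D`. -/
theorem stmt11 (M : Type*) [Fintype M]
    (pe : M → Fin 3 → ℝ) (hpe0 : ∀ m x, 0 ≤ pe m x)
    (hpe1 : ∀ x, ∑ m, pe m x = 1)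
    (pd : Fin 4 → M → ℝ) (hpd0 : ∀ z m, 0 ≤ pd z m)
    (hpd1 : ∀ m, ∑ z, pd z m = 1)
    (p : Fin 4 → Fin 3 → ℝ)
    (hp : ∀ z x, p z x = ∑ m, pe m x * pd z m)
    (D : ℝ)
    (hD : D = (1 / 3 : ℝ) * ∑ m, Finset.univ.sup' Finset.univ_nonempty fun x => pe m x) :
    p 1 0 + p 0 2 + p 2 0 + p 3 1 ≤ 3 * D :=
  stmt11_general M pe pd hpd0 hpd1 p hp D hD
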